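/- Let X be an object of an abelian category satisfying the bi-chain condition. Then X is indecomposable if and only if its endomorphism ring End(X) is a local ring. -/

import Mathlib

open CategoryTheory CategoryTheory.Limits

attribute [local instance] CategoryTheory.Abelian.hasFiniteBiproducts
attribute [local instance] CategoryTheory.Limits.hasBinaryBiproducts_of_finite_biproducts

universe v u

/-- An object `X` satisfies the *bi-chain condition* if for every bi-chain
`X_n ⟶ X_{n+1} ⟶ X_n` (with the `α n` epimorphisms and the `β n` monomorphisms)
starting at `X₀ = X`, all `α n` and `β n` are isomorphisms for large enough `n`. -/
def BichainCondition {A : Type u} [Category.{v} A] (X : A) : Prop :=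
  ∀ (obj : ℕ → A) (α : ∀ n, obj n ⟶ obj (n + 1)) (β : ∀ n, obj (n + 1) ⟶ obj n),
    obj 0 = X → (∀ n, Epi (α n)) → (∀ n, Mono (β n)) →
    ∃ n₀ : ℕ, ∀ n, n₀ ≤ n → IsIso (α n) ∧ IsIso (β n)

/-!
Fitting's lemma. For `f : End X`, `f` maps `image (f ^ n)` onto `image (f ^ (n + 1))`, which
includes back into `image (f ^ n)`; this is a bi-chain. Once both maps are isomorphisms, `f`
restricts to an automorphism of `I = image (f ^ n)`, so writing `f ^ n = p ≫ ι` through `I`, the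
composite `ι ≫ p = (f|I) ^ n` is invertible and `I` is a retract, hence a direct summand, of `X`.
If `X` is indecomposable, then either `I = 0` and `f` is nilpotent, or `I ≅ X` and `f` is
invertible; so `f` or `1 - f` is a unit. Conversely, a decomposition `X ≅ Y ⊞ Z` yields an
idempotent of `End X`, and the only idempotents of a local ring are `0` and `1`.
-/

theorem IsLocalRing.eq_zero_or_eq_one_of_isIdempotentElem {R : Type*} [Ring R] [IsLocalRing R]
    {e : R} (he : IsIdempotentElem e) : e = 0 ∨ e = 1 := by
  rcases IsLocalRing.isUnit_or_isUnit_of_add_one (add_sub_cancel e 1) with hu | hu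
  · exact Or.inr ((IsIdempotentElem.iff_eq_one_of_isUnit hu).mp he)
  · exact Or.inl (sub_eq_self.mp ((IsIdempotentElem.iff_eq_one_of_isUnit hu).mp he.one_sub))

section Preadditive

variable {C : Type u} [Category.{v} C] [Preadditive C] [HasBinaryBiproducts C]

theorem indecomposable_of_isLocalRing_end {X : C} [IsLocalRing (End X)] : Indecomposable X := by
  refine ⟨fun hX => one_ne_zero (α := End X) (hX.eq_of_src _ _), fun Y Z i => ?_⟩
  let e : End X := i.hom ≫ biprod.fst ≫ biprod.inl ≫ i.inv
  have he : IsIdempotentElem e := by simp [IsIdempotentElem, e, End.mul_def]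
  rcases IsLocalRing.eq_zero_or_eq_one_of_isIdempotentElem he with h0 | h1
  · refine Or.inl ((IsZero.iff_id_eq_zero Y).mpr ?_)
    calc 𝟙 Y = biprod.inl ≫ i.inv ≫ (e : X ⟶ X) ≫ i.hom ≫ biprod.fst := by simp [e]
      _ = 0 := by simp [h0]
  · refine Or.inr ((IsZero.iff_id_eq_zero Z).mpr ?_)
    calc 𝟙 Z = biprod.inr ≫ i.inv ≫ (e : X ⟶ X) ≫ i.hom ≫ biprod.snd := by
          simp [h1, End.one_def]
      _ = 0 := by simp [e]

end Preadditive

-- The bi-chain condition asks for `obj 0 = X` on the nose; this lets a chain start at an object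
-- such as `image (𝟙 X)` that is only isomorphic to `X`.
theorem BichainCondition.exists_isIso_of_epi_of_mono {A : Type u} [Category.{v} A] {X : A}
    (hX : BichainCondition X) {obj : ℕ → A} (α : ∀ n, obj n ⟶ obj (n + 1))
    (β : ∀ n, obj (n + 1) ⟶ obj n) [∀ n, Epi (α n)] [∀ n, Mono (β n)]
    (a : X ⟶ obj 0) (b : obj 0 ⟶ X) [Epi a] [Mono b] :
    ∃ n₀, ∀ n, n₀ ≤ n → IsIso (α n) ∧ IsIso (β n) := by
  let obj' : ℕ → A := fun n => Nat.casesOn n X obj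
  let α' : ∀ n, obj' n ⟶ obj' (n + 1) := fun n => Nat.casesOn n a α
  let β' : ∀ n, obj' (n + 1) ⟶ obj' n := fun n => Nat.casesOn n b β
  obtain ⟨n₀, hn₀⟩ := hX obj' α' β' rfl
    (fun n => by cases n with | zero => exact ‹Epi a› | succ n => exact ‹∀ n, Epi (α n)› n)
    (fun n => by cases n with | zero => exact ‹Mono b› | succ n => exact ‹∀ n, Mono (β n)› n)
  exact ⟨n₀, fun n hn => hn₀ (n + 1) (by omega)⟩

section Abelian

variable {C : Type u} [Category.{v} C] [Abelian C]

theorem CategoryTheory.Indecomposable.isZero_or_isIso_of_retract {X Y : C} (hX : Indecomposable X)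
    (h : Retract Y X) : IsZero Y ∨ IsIso h.i := by
  let S := ShortComplex.cokernelSequence h.i
  have hS : S.Splitting :=
    .ofExactOfRetraction S (ShortComplex.cokernelSequence_exact h.i) h.r h.retract
      (inferInstanceAs (Epi (cokernel.π h.i)))
  rcases hX.2 _ _ hS.isoBinaryBiproduct with hY | hK
  · exact Or.inl hY
  · have : Epi h.i := Preadditive.epi_of_isZero_cokernel _ hK
    exact Or.inr (isIso_of_mono_of_epi h.i)

theorem CategoryTheory.Indecomposable.eq_zero_or_isIso_of_isIso_ι_comp_factorThruImage {X : C}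
    (hX : Indecomposable X) (g : X ⟶ X) [IsIso (image.ι g ≫ factorThruImage g)] :
    g = 0 ∨ IsIso g := by
  let h : Retract (image g) X :=
    ⟨image.ι g, factorThruImage g ≫ inv (image.ι g ≫ factorThruImage g),
      by rw [← Category.assoc, IsIso.hom_inv_id]⟩
  rcases hX.isZero_or_isIso_of_retract h with hI | hι
  · exact Or.inl (by rw [← image.fac g, hI.eq_of_src (image.ι g) 0, comp_zero])
  · have : IsIso (image.ι g) := hι
    have : IsIso (factorThruImage g) := IsIso.of_isIso_comp_left (image.ι g) _
    exact Or.inr (by rw [← image.fac g]; infer_instance)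

end Abelian

theorem CategoryTheory.End.pow_comp_eq_comp_pow {C : Type u} [Category.{v} C] {X Y : C}
    {γ : End Y} {f : End X} {ι : Y ⟶ X} (h : γ ≫ ι = ι ≫ f) (k : ℕ) :
    (γ ^ k : Y ⟶ Y) ≫ ι = ι ≫ (f ^ k : X ⟶ X) := by
  induction k with
  | zero => simp [End.one_def]
  | succ k ih => rw [pow_succ, pow_succ, End.mul_def, End.mul_def, Category.assoc, ih,
      ← Category.assoc, h, Category.assoc]

section ImagePow

variable {C : Type u} [Category.{v} C] [Abelian C] {X : C} (f : End X) (n : ℕ)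

noncomputable def imagePowSuccMap : image (f ^ n : X ⟶ X) ⟶ image (f ^ (n + 1) : X ⟶ X) :=
  image.map (Arrow.homMk' (𝟙 X) f (by rw [Category.id_comp, pow_succ', End.mul_def]))

noncomputable def imagePowSuccInclusion : image (f ^ (n + 1) : X ⟶ X) ⟶ image (f ^ n : X ⟶ X) :=
  image.map (Arrow.homMk' f (𝟙 X) (by rw [Category.comp_id, pow_succ, End.mul_def]))

theorem imagePowSuccMap_ι :
    imagePowSuccMap f n ≫ image.ι (f ^ (n + 1) : X ⟶ X) = image.ι (f ^ n : X ⟶ X) ≫ f :=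
  image.map_ι _

theorem factorThruImage_imagePowSuccMap :
    factorThruImage (f ^ n : X ⟶ X) ≫ imagePowSuccMap f n =
      factorThruImage (f ^ (n + 1) : X ⟶ X) := by
  rw [← cancel_mono (image.ι _), Category.assoc, imagePowSuccMap_ι, image.fac_assoc, image.fac,
    pow_succ', End.mul_def]

theorem imagePowSuccInclusion_ι :
    imagePowSuccInclusion f n ≫ image.ι (f ^ n : X ⟶ X) = image.ι (f ^ (n + 1) : X ⟶ X) :=
  (image.map_ι _).trans (Category.comp_id _)

instance : Epi (imagePowSuccMap f n) := by
  have : Epi (factorThruImage (f ^ n : X ⟶ X) ≫ imagePowSuccMap f n) := by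
    rw [factorThruImage_imagePowSuccMap]; infer_instance
  exact epi_of_epi (factorThruImage _) _

instance : Mono (imagePowSuccInclusion f n) := by
  have : Mono (imagePowSuccInclusion f n ≫ image.ι (f ^ n : X ⟶ X)) := by
    rw [imagePowSuccInclusion_ι]; infer_instance
  exact mono_of_mono _ (image.ι _)

end ImagePow

section Fitting

variable {C : Type u} [Category.{v} C] [Abelian C] {X : C}

theorem isIso_ι_comp_factorThruImage_pow (f : End X) (n : ℕ) [IsIso (imagePowSuccMap f n)]
    [IsIso (imagePowSuccInclusion f n)] :
    IsIso (image.ι (f ^ n : X ⟶ X) ≫ factorThruImage (f ^ n : X ⟶ X)) := by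
  let γ : End (image (f ^ n : X ⟶ X)) := imagePowSuccMap f n ≫ imagePowSuccInclusion f n
  have hγ : γ ≫ image.ι _ = image.ι _ ≫ f := by
    simp only [γ, Category.assoc, imagePowSuccInclusion_ι, imagePowSuccMap_ι]
  have hγn : (γ ^ n : _ ⟶ _) = image.ι _ ≫ factorThruImage _ := by
    rw [← cancel_mono (image.ι _), End.pow_comp_eq_comp_pow hγ, Category.assoc, image.fac]
  rw [← hγn, ← isUnit_iff_isIso]
  exact ((isUnit_iff_isIso γ).mpr inferInstance).pow n

theorem BichainCondition.exists_isIso_ι_comp_factorThruImage_pow (hX : BichainCondition X)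
    (f : End X) : ∃ n ≠ 0, IsIso (image.ι (f ^ n : X ⟶ X) ≫ factorThruImage (f ^ n : X ⟶ X)) := by
  obtain ⟨n₀, hn₀⟩ := hX.exists_isIso_of_epi_of_mono (imagePowSuccMap f)
    (imagePowSuccInclusion f) (factorThruImage (f ^ 0 : X ⟶ X)) (image.ι _)
  obtain ⟨_, _⟩ := hn₀ (n₀ + 1) n₀.le_succ
  exact ⟨n₀ + 1, n₀.succ_ne_zero, isIso_ι_comp_factorThruImage_pow f _⟩

theorem BichainCondition.isNilpotent_or_isUnit (hX : BichainCondition X)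
    (hind : Indecomposable X) (f : End X) : IsNilpotent f ∨ IsUnit f := by
  obtain ⟨n, hn, _⟩ := hX.exists_isIso_ι_comp_factorThruImage_pow f
  rcases hind.eq_zero_or_isIso_of_isIso_ι_comp_factorThruImage (f ^ n) with h | h
  · exact Or.inl ⟨n, h⟩
  · exact Or.inr ((isUnit_pow_iff hn).mp ((isUnit_iff_isIso _).mpr h))

theorem BichainCondition.isLocalRing_end_of_indecomposable (hX : BichainCondition X)
    (hind : Indecomposable X) : IsLocalRing (End X) :=
  have : Nontrivial (End X) := ⟨1, 0, fun h => hind.1 ((IsZero.iff_id_eq_zero X).mpr h)⟩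
  .of_isUnit_or_isUnit_one_sub_self fun f =>
    (hX.isNilpotent_or_isUnit hind f).elim (fun h => .inr h.isUnit_one_sub) .inl

end Fitting

/-- An object of an abelian category satisfying the bi-chain condition is indecomposable
if and only if its endomorphism ring is local. -/
theorem indecomposable_iff_isLocalRing_end {A : Type u} [Category.{v} A] [Abelian A]
    (X : A) (h : BichainCondition X) :
    Indecomposable X ↔ IsLocalRing (End X) :=
  ⟨h.isLocalRing_end_of_indecomposable, fun _ => indecomposable_of_isLocalRing_end⟩
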